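/- arXiv:0904.1505 — 2 statements merged into one kernel-verified Lean document; each statement's English description precedes it below -/
import Mathlib

section
/- Let L be a negative definite real n×n matrix and e ∈ ℝ^n. Then every solution of the rate equation y' = diag(y)(L y + e) starting in the open positive cone is bounded on its maximal interval of existence, and hence exists for all t ≥ 0. -/
/-!
Each coordinate solves a scalar linear equation `y_a' = g(t) y_a` with `g` continuous, so by
backward uniqueness it cannot reach `0`: solutions stay in the positive cone. Negative
definiteness gives `yᵀLy ≤ -c‖y‖²`, so the Lyapunov function `V = ∑ y_a` satisfies
`V' = yᵀLy + yᵀe ≤ -c‖y‖² + ‖e‖V` with `‖y‖ ≥ V / n`, hence `V' < 0` as soon as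
`V > n²‖e‖ / c`. Thus `V` never exceeds `max (V 0) (n²‖e‖ / c + 1)`, and `‖y‖ ≤ V`.
-/

open Matrix Set

section

variable {ι : Type*} [Fintype ι]

theorem dotProduct_mulVec_smul_self (L : Matrix ι ι ℝ) (r : ℝ) (x : ι → ℝ) :
    (r • x) ⬝ᵥ L *ᵥ (r • x) = r ^ 2 * (x ⬝ᵥ L *ᵥ x) := by
  rw [mulVec_smul, smul_dotProduct, dotProduct_smul, smul_eq_mul, smul_eq_mul]
  ring

theorem exists_dotProduct_mulVec_le_neg_mul_norm_sq {L : Matrix ι ι ℝ}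
    (hL : ∀ x : ι → ℝ, x ≠ 0 → x ⬝ᵥ L *ᵥ x < 0) :
    ∃ c > 0, ∀ x : ι → ℝ, x ⬝ᵥ L *ᵥ x ≤ -(c * ‖x‖ ^ 2) := by
  rcases isEmpty_or_nonempty ι with _ | _
  · exact ⟨1, one_pos, fun x => by simp [Subsingleton.elim x 0]⟩
  have hQ : Continuous fun x : ι → ℝ => x ⬝ᵥ L *ᵥ x := by fun_prop
  -- the maximum of the form on the unit sphere is `-c`
  obtain ⟨u, hu, hmax⟩ := (isCompact_sphere (0 : ι → ℝ) 1).exists_isMaxOn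
    (NormedSpace.sphere_nonempty.2 zero_le_one) hQ.continuousOn
  have hu0 : u ≠ 0 := ne_zero_of_mem_unit_sphere ⟨u, hu⟩
  refine ⟨-(u ⬝ᵥ L *ᵥ u), neg_pos.2 (hL u hu0), fun x => ?_⟩
  rcases eq_or_ne x 0 with rfl | hx
  · simp
  have hxn : 0 < ‖x‖ := norm_pos_iff.2 hx
  have hx_sphere : ‖x‖⁻¹ • x ∈ Metric.sphere (0 : ι → ℝ) 1 := by
    simp [norm_smul, hxn.ne']
  calc x ⬝ᵥ L *ᵥ x = ‖x‖ ^ 2 * ((‖x‖⁻¹ • x) ⬝ᵥ L *ᵥ (‖x‖⁻¹ • x)) := by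
        rw [dotProduct_mulVec_smul_self]; field_simp
    _ ≤ ‖x‖ ^ 2 * (u ⬝ᵥ L *ᵥ u) := by gcongr; exact hmax hx_sphere
    _ = -(-(u ⬝ᵥ L *ᵥ u) * ‖x‖ ^ 2) := by ring

theorem sum_le_card_mul_norm (x : ι → ℝ) : ∑ i, x i ≤ Fintype.card ι * ‖x‖ := by
  simpa using Finset.sum_le_card_nsmul Finset.univ x ‖x‖
    fun i _ => (le_abs_self _).trans (norm_le_pi_norm x i)

theorem norm_le_sum_of_nonneg {x : ι → ℝ} (hx : 0 ≤ x) : ‖x‖ ≤ ∑ i, x i :=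
  (pi_norm_le_iff_of_nonneg (Finset.sum_nonneg fun i _ => hx i)).2 fun i => by
    rw [Real.norm_of_nonneg (hx i)]
    exact Finset.single_le_sum (fun j _ => hx j) (Finset.mem_univ i)

theorem dotProduct_le_norm_mul_sum {x : ι → ℝ} (hx : 0 ≤ x) (e : ι → ℝ) :
    x ⬝ᵥ e ≤ ‖e‖ * ∑ i, x i := by
  rw [Finset.mul_sum]
  refine Finset.sum_le_sum fun i _ => ?_
  rw [mul_comm ‖e‖]
  exact mul_le_mul_of_nonneg_left ((le_abs_self _).trans (norm_le_pi_norm e i)) (hx i)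

theorem eqOn_zero_of_hasDerivAt_mul_of_eq_zero {z g : ℝ → ℝ} {a b : ℝ}
    (hz : ∀ t ∈ Icc a b, HasDerivAt z (g t * z t) t) (hg : ContinuousOn g (Icc a b))
    (hb : z b = 0) : EqOn z 0 (Icc a b) := by
  obtain ⟨C, hC⟩ := isCompact_Icc.exists_bound_of_continuousOn hg
  have hLip : ∀ t ∈ Ioc a b, LipschitzOnWith C.toNNReal (fun x : ℝ => g t • x) univ := fun t ht =>
    ((lipschitzWith_smul (g t)).weaken (by
      rw [← NNReal.coe_le_coe, coe_nnnorm, Real.coe_toNNReal']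
      exact (hC t (Ioc_subset_Icc_self ht)).trans (le_max_left _ _))).lipschitzOnWith
  refine ODE_solution_unique_of_mem_Icc_left hLip
    (fun t ht => (hz t ht).continuousAt.continuousWithinAt)
    (fun t ht => (hz t (Ioc_subset_Icc_self ht)).hasDerivWithinAt) (fun _ _ => mem_univ _)
    continuousOn_const (fun t _ => ?_) (fun _ _ => mem_univ _) hb
  simpa [Pi.zero_def] using hasDerivWithinAt_const t (Iic t) (0 : ℝ)

theorem pos_of_hasDerivAt_mul {z g : ℝ → ℝ} {a b : ℝ}
    (hz : ∀ t ∈ Ico a b, HasDerivAt z (g t * z t) t) (hg : ∀ t ∈ Ico a b, ContinuousAt g t)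
    (ha : 0 < z a) : ∀ t ∈ Ico a b, 0 < z t := by
  intro t ht
  by_contra! hzt
  have hsub : Icc a t ⊆ Ico a b := Icc_subset_Ico_right ht.2
  obtain ⟨s, hs, hzs⟩ : ∃ s ∈ Icc a t, z s = 0 :=
    intermediate_value_Icc' ht.1 (fun u hu => (hz u (hsub hu)).continuousAt.continuousWithinAt)
      ⟨hzt, ha.le⟩
  have hsub' : Icc a s ⊆ Ico a b := (Icc_subset_Icc_right hs.2).trans hsub
  have := eqOn_zero_of_hasDerivAt_mul_of_eq_zero (fun u hu => hz u (hsub' hu))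
    (fun u hu => (hg u (hsub' hu)).continuousWithinAt) hzs (left_mem_Icc.2 hs.1)
  simp [this] at ha

def rateField (L : Matrix ι ι ℝ) (e x : ι → ℝ) : ι → ℝ := fun i => x i * ((L *ᵥ x) i + e i)

theorem sum_rateField (L : Matrix ι ι ℝ) (e x : ι → ℝ) :
    ∑ i, rateField L e x i = x ⬝ᵥ L *ᵥ x + x ⬝ᵥ e := by
  simp only [rateField, dotProduct, mul_add, Finset.sum_add_distrib]

theorem sum_rateField_neg {L : Matrix ι ι ℝ} {c : ℝ} (hc : 0 < c)
    (hL : ∀ x : ι → ℝ, x ⬝ᵥ L *ᵥ x ≤ -(c * ‖x‖ ^ 2)) (e : ι → ℝ) {x : ι → ℝ} (hx : 0 ≤ x)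
    (hlarge : Fintype.card ι ^ 2 * ‖e‖ / c < ∑ i, x i) : ∑ i, rateField L e x i < 0 := by
  set V := ∑ i, x i
  have hV : 0 < V := lt_of_le_of_lt (by positivity) hlarge
  have hcV : Fintype.card ι ^ 2 * ‖e‖ < c * V := by rwa [div_lt_iff₀' hc] at hlarge
  have hVx : V ^ 2 ≤ (Fintype.card ι * ‖x‖) ^ 2 :=
    pow_le_pow_left₀ hV.le (sum_le_card_mul_norm x) 2
  rw [sum_rateField]
  nlinarith [hL x, dotProduct_le_norm_mul_sum hx e, mul_lt_mul_of_pos_right hcV hV]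

theorem pos_of_hasDerivAt_rateField {L : Matrix ι ι ℝ} {e : ι → ℝ} {y : ℝ → ι → ℝ} {a b : ℝ}
    (hy : ∀ t ∈ Ico a b, HasDerivAt y (rateField L e (y t)) t) (ha : ∀ i, 0 < y a i) :
    ∀ t ∈ Ico a b, ∀ i, 0 < y t i := fun t ht i =>
  pos_of_hasDerivAt_mul (g := fun u => (L *ᵥ y u) i + e i)
    (fun u hu => (hasDerivAt_pi.1 (hy u hu) i).congr_deriv (mul_comm _ _))
    (fun u hu => by have := (hy u hu).continuousAt; fun_prop) (ha i) t ht

theorem sum_le_of_hasDerivAt_rateField {L : Matrix ι ι ℝ} {c : ℝ} (hc : 0 < c)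
    (hL : ∀ x : ι → ℝ, x ⬝ᵥ L *ᵥ x ≤ -(c * ‖x‖ ^ 2)) {e : ι → ℝ} {y : ℝ → ι → ℝ} {a b B : ℝ}
    (hy : ∀ t ∈ Ico a b, HasDerivAt y (rateField L e (y t)) t) (hpos : ∀ t ∈ Ico a b, 0 ≤ y t)
    (hB : Fintype.card ι ^ 2 * ‖e‖ / c < B) (ha : ∑ i, y a i ≤ B) :
    ∀ t ∈ Ico a b, ∑ i, y t i ≤ B := by
  intro t ht
  have hsub : Icc a t ⊆ Ico a b := Icc_subset_Ico_right ht.2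
  have hV : ∀ u ∈ Icc a t, HasDerivAt (fun s => ∑ i, y s i) (∑ i, rateField L e (y u) i) u :=
    fun u hu => HasDerivAt.fun_sum fun i _ => hasDerivAt_pi.1 (hy u (hsub hu)) i
  -- `B` is a barrier: `∑ i, y t i` strictly decreases whenever it reaches `B`
  refine image_le_of_deriv_right_lt_deriv_boundary (B' := 0)
    (fun u hu => (hV u hu).continuousAt.continuousWithinAt)
    (fun u hu => (hV u (Ico_subset_Icc_self hu)).hasDerivWithinAt) ha
    (fun _ => hasDerivAt_const _ B) (fun u hu hVB => ?_) (right_mem_Icc.2 ht.1)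
  exact sum_rateField_neg hc hL e (hpos u (hsub (Ico_subset_Icc_self hu))) (hVB ▸ hB)

end

/-- If L is negative definite, every solution of the rate equation
y' = diag(y)(Ly + e) starting in the open positive cone is bounded,
uniformly over its (maximal) interval of existence. -/
theorem rate_equation_bounded (n : ℕ) (L : Matrix (Fin n) (Fin n) ℝ)
    (hL : ∀ x : Fin n → ℝ, x ≠ 0 → x ⬝ᵥ L.mulVec x < 0)
    (e : Fin n → ℝ) (y0 : Fin n → ℝ) (hy0 : ∀ a, 0 < y0 a) :
    ∃ M : ℝ, ∀ T : ℝ, ∀ y : ℝ → Fin n → ℝ,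
      y 0 = y0 →
      (∀ t ∈ Set.Ico (0 : ℝ) T,
        HasDerivAt y (fun a => y t a * (L.mulVec (y t) a + e a)) t) →
      ∀ t ∈ Set.Ico (0 : ℝ) T, ‖y t‖ ≤ M := by
  obtain ⟨c, hc, hcoer⟩ := exists_dotProduct_mulVec_le_neg_mul_norm_sq hL
  refine ⟨max (∑ i, y0 i) (n ^ 2 * ‖e‖ / c + 1), fun T y hy_zero hy t ht => ?_⟩
  have hpos : ∀ t ∈ Ico 0 T, 0 ≤ y t := fun t ht i =>
    (pos_of_hasDerivAt_rateField hy (hy_zero ▸ hy0) t ht i).le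
  calc ‖y t‖ ≤ ∑ i, y t i := norm_le_sum_of_nonneg (hpos t ht)
    _ ≤ _ := sum_le_of_hasDerivAt_rateField hc hcoer hy hpos
      (by rw [Fintype.card_fin]; exact (lt_add_one _).trans_le (le_max_right _ _))
      (hy_zero ▸ le_max_left _ _) t ht
end

section
/- In the symmetric winner-takes-all case with mutual inhibition ℓ₃₄ = ℓ₄₃ = -m (m > 0) and inputs ℓ₃₁, ℓ₄₂ > 0, the degenerate state (ℓ₃₁, 0) is linearly stable (both Jacobian eigenvalues negative) if and only if ℓ₃₁ > ℓ₄₂/m. -/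
/-!
At the boundary equilibrium (ℓ₃₁, 0) the Jacobian of the competition field is upper triangular
with diagonal −ℓ₃₁ and ℓ₄₂ − m ℓ₃₁, so these are its eigenvalues. The first is always negative,
and the second is negative exactly when m ℓ₃₁ > ℓ₄₂.
-/

open Matrix

def competitionField (m r₁ r₂ : ℝ) (y : ℝ × ℝ) : ℝ × ℝ :=
  (y.1 * (-y.1 - m * y.2 + r₁), y.2 * (-y.2 - m * y.1 + r₂))

theorem fderiv_competitionField_apply (m r₁ r₂ : ℝ) (p v : ℝ × ℝ) :
    fderiv ℝ (competitionField m r₁ r₂) p v =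
      ((-2 * p.1 - m * p.2 + r₁) * v.1 - m * p.1 * v.2,
        -m * p.2 * v.1 + (-2 * p.2 - m * p.1 + r₂) * v.2) := by
  have h₁ : HasFDerivAt (fun y : ℝ × ℝ => y.1 * (-y.1 - m * y.2 + r₁)) _ p :=
    hasFDerivAt_fst.mul
      ((hasFDerivAt_fst.neg.sub ((hasFDerivAt_snd (𝕜 := ℝ) (p := p)).const_mul m)).add_const r₁)
  have h₂ : HasFDerivAt (fun y : ℝ × ℝ => y.2 * (-y.2 - m * y.1 + r₂)) _ p :=
    hasFDerivAt_snd.mul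
      ((hasFDerivAt_snd.neg.sub ((hasFDerivAt_fst (𝕜 := ℝ) (p := p)).const_mul m)).add_const r₂)
  unfold competitionField
  rw [(h₁.prodMk h₂).fderiv]
  simp only [ContinuousLinearMap.prod_apply, _root_.add_apply,
    _root_.smul_apply, _root_.sub_apply, _root_.neg_apply,
    ContinuousLinearMap.coe_fst', ContinuousLinearMap.coe_snd', smul_eq_mul]
  ext <;> ring

theorem det_fin_two_upper_sub_smul_one {R : Type*} [CommRing R] (a b d μ : R) :
    (!![a, b; 0, d] - μ • (1 : Matrix (Fin 2) (Fin 2) R)).det = (a - μ) * (d - μ) := by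
  rw [det_fin_two]
  simp

theorem forall_eigenvalue_neg_fin_two_upper_iff {R : Type*} [Field R] [LinearOrder R]
    [IsStrictOrderedRing R] (a b d : R) :
    (∀ μ : R, (!![a, b; 0, d] - μ • (1 : Matrix (Fin 2) (Fin 2) R)).det = 0 → μ < 0) ↔
      a < 0 ∧ d < 0 := by
  simp only [det_fin_two_upper_sub_smul_one, mul_eq_zero, sub_eq_zero]
  constructor
  · intro h
    exact ⟨h a (Or.inl rfl), h d (Or.inr rfl)⟩
  · rintro ⟨ha, hd⟩ μ (rfl | rfl) <;> assumption

theorem wta_degenerate_stability_general (m l31 l42 : ℝ)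
    (hm : 0 < m) (h31 : 0 < l31) :
    let F : ℝ × ℝ → ℝ × ℝ := fun y =>
      (y.1 * (-y.1 - m * y.2 + l31), y.2 * (-y.2 - m * y.1 + l42))
    let J : ℝ × ℝ → Matrix (Fin 2) (Fin 2) ℝ := fun p =>
      !![(fderiv ℝ F p (1, 0)).1, (fderiv ℝ F p (0, 1)).1;
         (fderiv ℝ F p (1, 0)).2, (fderiv ℝ F p (0, 1)).2]
    (∀ μ : ℝ, (J (l31, 0) - μ • (1 : Matrix (Fin 2) (Fin 2) ℝ)).det = 0
        → μ < 0) ↔ l31 > l42 / m := by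
  intro F J
  have hJ : J (l31, 0) = !![-l31, -(m * l31); 0, l42 - m * l31] := by
    have hF : F = competitionField m l31 l42 := rfl
    simp only [J, hF, fderiv_competitionField_apply]
    ext i j; fin_cases i <;> fin_cases j <;> simp <;> ring
  rw [hJ, forall_eigenvalue_neg_fin_two_upper_iff, gt_iff_lt, div_lt_iff₀ hm]
  constructor
  · rintro ⟨-, h⟩
    linarith
  · intro h
    exact ⟨neg_neg_of_pos h31, by linarith⟩

/-- Winner-takes-all: with mutual inhibition of strength m > 0 and positive
inputs, the degenerate state (ℓ₃₁, 0) is linearly stable (all Jacobian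
eigenvalues negative) iff ℓ₃₁ > ℓ₄₂/m. -/
theorem wta_degenerate_stability (m l31 l42 : ℝ)
    (hm : 0 < m) (h31 : 0 < l31) (h42 : 0 < l42) :
    let F : ℝ × ℝ → ℝ × ℝ := fun y =>
      (y.1 * (-y.1 - m * y.2 + l31), y.2 * (-y.2 - m * y.1 + l42))
    let J : ℝ × ℝ → Matrix (Fin 2) (Fin 2) ℝ := fun p =>
      !![(fderiv ℝ F p (1, 0)).1, (fderiv ℝ F p (0, 1)).1;
         (fderiv ℝ F p (1, 0)).2, (fderiv ℝ F p (0, 1)).2]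
    (∀ μ : ℝ, (J (l31, 0) - μ • (1 : Matrix (Fin 2) (Fin 2) ℝ)).det = 0
        → μ < 0) ↔ l31 > l42 / m :=
  wta_degenerate_stability_general m l31 l42 hm h31
end
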